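/- For all walks p from v to v' in G with label in L(A) (A unambiguous, single final state), the minimum walk length equals the G×-distance from (v,q₀) to (v',q_F), and the number of shortest such walks equals the number of shortest paths from (v,q₀) to (v',q_F) in G×. -/

import Mathlib

/-- A graph database: edges with source, target, and label. -/
structure GraphDB (V E S : Type) where
  src : E → V
  tgt : E → V
  lab : E → S

/-- An NFA with transition relation `δ ⊆ Q × Σ × Q`, initial state `q0`, final states `F`. -/
structure NFAx (Q S : Type) where
  δ : Set (Q × S × Q)
  q0 : Q
  F : Set Q

/-- `A.Run q w q'`: the automaton can read word `w` going from state `q` to state `q'`. -/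
inductive NFAx.Run {Q S : Type} (A : NFAx Q S) : Q → List S → Q → Prop
  | nil (q : Q) : A.Run q [] q
  | cons {q q' q'' : Q} {a : S} {w : List S} :
      (q, a, q') ∈ A.δ → A.Run q' w q'' → A.Run q (a :: w) q''

/-- The language accepted by the NFA. -/
def NFAx.Lang {Q S : Type} (A : NFAx Q S) : Set (List S) :=
  {w | ∃ qf ∈ A.F, A.Run A.q0 w qf}

/-- `G.IsWalk v es w`: the edge list `es` forms a walk from `v` to `w` in `G`. -/
def GraphDB.IsWalk {V E S : Type} (G : GraphDB V E S) : V → List E → V → Prop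
  | v, [], w => v = w
  | v, e :: es, w => G.src e = v ∧ G.IsWalk (G.tgt e) es w

/-- Distance (minimum number of edges over all walks), `⊤` if unreachable. -/
noncomputable def GraphDB.dist {V E S : Type} (G : GraphDB V E S) (v w : V) : ℕ∞ :=
  sInf {n : ℕ∞ | ∃ es : List E, G.IsWalk v es w ∧ (es.length : ℕ∞) = n}

/-- Edges of the product graph: pairs of a `G`-edge and a compatible transition. -/
def ProdE {V E Q S : Type} (G : GraphDB V E S) (A : NFAx Q S) : Type :=
  {p : E × Q × S × Q // p.2 ∈ A.δ ∧ G.lab p.1 = p.2.2.1}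

/-- The product graph `G×` of a graph database `G` and an NFA `A`. -/
def ProdGraph {V E Q S : Type} (G : GraphDB V E S) (A : NFAx Q S) :
    GraphDB (V × Q) (ProdE G A) S where
  src p := (G.src p.1.1, p.1.2.1)
  tgt p := (G.tgt p.1.1, p.1.2.2.2)
  lab p := G.lab p.1.1

/-- Projection of a product-graph edge to the underlying `G`-edge. -/
def projE {V E Q S : Type} {G : GraphDB V E S} {A : NFAx Q S} (p : ProdE G A) : E := p.1.1

/-- `A.RunStates q w qs qf`: `qs` is the full state sequence of a run on `w` from `q` to `qf`. -/
inductive NFAx.RunStates {Q S : Type} (A : NFAx Q S) : Q → List S → List Q → Q → Prop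
  | nil (q : Q) : A.RunStates q [] [q] q
  | cons {q q' qf : Q} {a : S} {w : List S} {qs : List Q} :
      (q, a, q') ∈ A.δ → A.RunStates q' w qs qf → A.RunStates q (a :: w) (q :: qs) qf

/-- `A` is unambiguous: every accepted word has exactly one accepting run (state sequence). -/
def NFAx.Unambiguous {Q S : Type} (A : NFAx Q S) : Prop :=
  ∀ (w : List S) (qs₁ qs₂ : List Q) (q₁ q₂ : Q), q₁ ∈ A.F → q₂ ∈ A.F →
    A.RunStates A.q0 w qs₁ q₁ → A.RunStates A.q0 w qs₂ q₂ → qs₁ = qs₂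

/-
The product construction is a length-preserving bijection: a walk in `G×` from `(v, q₀)` to
`(v', q_F)` is exactly a walk `es` of `G` from `v` to `v'` together with a run of `A` on the label
of `es` ending in `q_F`, the walk being the projection to `G` and the run its sequence of states.
Since `q_F` is the only final state, these runs are the accepting runs, and unambiguity makes the
run a function of `es`. So projecting to `G` maps the walks of `G×` injectively onto the walks of
`G` with label in `L(A)`, preserving lengths: both the minimal lengths and the numbers of walks
of minimal length agree.
-/

variable {V E Q S : Type} {G : GraphDB V E S} {A : NFAx Q S}

theorem NFAx.RunStates.run {q q' : Q} {w : List S} {qs : List Q} (h : A.RunStates q w qs q') :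
    A.Run q w q' := by
  induction h with
  | nil q => exact .nil q
  | cons hδ _ ih => exact .cons hδ ih

theorem NFAx.Run.exists_runStates {q q' : Q} {w : List S} (h : A.Run q w q') :
    ∃ qs, A.RunStates q w qs q' := by
  induction h with
  | nil q => exact ⟨[q], .nil q⟩
  | cons hδ _ ih =>
    obtain ⟨qs, hqs⟩ := ih
    exact ⟨_, .cons hδ hqs⟩

def ProdE.tgtState (p : ProdE G A) : Q := p.1.2.2.2

theorem ProdE.ext {p₁ p₂ : ProdE G A} (he : projE p₁ = projE p₂)
    (hsrc : p₁.1.2.1 = p₂.1.2.1) (htgt : p₁.tgtState = p₂.tgtState) : p₁ = p₂ :=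
  Subtype.ext <| Prod.ext he <| Prod.ext hsrc <|
    Prod.ext (p₁.2.2.symm.trans ((congrArg G.lab he).trans p₂.2.2)) htgt

namespace ProdGraph

theorem isWalk_map_projE {ps : List (ProdE G A)} {v v' : V} {q q' : Q}
    (h : (ProdGraph G A).IsWalk (v, q) ps (v', q')) :
    G.IsWalk v (ps.map projE) v' ∧
      A.RunStates q ((ps.map projE).map G.lab) (q :: ps.map ProdE.tgtState) q' := by
  induction ps generalizing v q with
  | nil =>
    obtain ⟨rfl, rfl⟩ := Prod.mk.inj h
    exact ⟨rfl, .nil q⟩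
  | cons p ps ih =>
    obtain ⟨⟨e, q₁, a, q₂⟩, hδ, hlab⟩ := p
    obtain ⟨hsrc, hw⟩ := h
    obtain ⟨he, rfl⟩ : G.src e = v ∧ q₁ = q := Prod.mk.inj hsrc
    obtain ⟨hw, hrun⟩ := ih hw
    obtain rfl : G.lab e = a := hlab
    exact ⟨⟨he, hw⟩, .cons hδ hrun⟩

theorem exists_isWalk_of_runStates {es : List E} {v v' : V} {q q' : Q} {qs : List Q}
    (hw : G.IsWalk v es v') (hrun : A.RunStates q (es.map G.lab) qs q') :
    ∃ ps : List (ProdE G A), (ProdGraph G A).IsWalk (v, q) ps (v', q') ∧ ps.map projE = es := by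
  induction es generalizing v q qs with
  | nil =>
    cases hrun
    exact ⟨[], by rw [show v = v' from hw]; rfl, rfl⟩
  | cons e es ih =>
    obtain ⟨hsrc, hw⟩ := hw
    cases hrun with
    | cons hδ hrun =>
      obtain ⟨ps, hps, rfl⟩ := ih hw hrun
      exact ⟨⟨(e, q, G.lab e, _), hδ, rfl⟩ :: ps, ⟨by rw [← hsrc]; rfl, hps⟩, rfl⟩

theorem walk_eq_of_map_eq {ps₁ ps₂ : List (ProdE G A)} {v v₁ v₂ : V} {q q₁ q₂ : Q}
    (h₁ : (ProdGraph G A).IsWalk (v, q) ps₁ (v₁, q₁))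
    (h₂ : (ProdGraph G A).IsWalk (v, q) ps₂ (v₂, q₂))
    (hproj : ps₁.map projE = ps₂.map projE)
    (hstates : ps₁.map ProdE.tgtState = ps₂.map ProdE.tgtState) : ps₁ = ps₂ := by
  induction ps₁ generalizing ps₂ v q with
  | nil => exact (List.map_eq_nil_iff.mp hproj.symm).symm
  | cons p₁ ps₁ ih =>
    obtain _ | ⟨p₂, ps₂⟩ := ps₂
    · exact absurd hproj (List.cons_ne_nil _ _)
    simp only [List.map_cons, List.cons.injEq] at hproj hstates
    obtain ⟨he, hproj⟩ := hproj
    obtain ⟨ht, hstates⟩ := hstates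
    obtain ⟨hsrc₁, hw₁⟩ := h₁
    obtain ⟨hsrc₂, hw₂⟩ := h₂
    have hq : p₁.1.2.1 = p₂.1.2.1 := (Prod.mk.inj hsrc₁).2.trans (Prod.mk.inj hsrc₂).2.symm
    obtain rfl := ProdE.ext he hq ht
    rw [ih hw₁ hw₂ hproj hstates]

theorem image_map_projE_walks {qF : Q} (hF : A.F = {qF}) (v v' : V) :
    List.map projE '' {ps | (ProdGraph G A).IsWalk (v, A.q0) ps (v', qF)} =
      {es | G.IsWalk v es v' ∧ es.map G.lab ∈ A.Lang} := by
  ext es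
  constructor
  · rintro ⟨ps, hps, rfl⟩
    obtain ⟨hw, hrun⟩ := isWalk_map_projE hps
    exact ⟨hw, qF, hF ▸ rfl, hrun.run⟩
  · rintro ⟨hw, qf, hqf, hrun⟩
    obtain rfl : qf = qF := by rwa [hF] at hqf
    obtain ⟨qs, hqs⟩ := hrun.exists_runStates
    exact exists_isWalk_of_runStates hw hqs

theorem injOn_map_projE_walks {qF : Q} (hqF : qF ∈ A.F) (hU : A.Unambiguous) (v v' : V) :
    Set.InjOn (List.map projE) {ps | (ProdGraph G A).IsWalk (v, A.q0) ps (v', qF)} := by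
  intro ps₁ h₁ ps₂ h₂ hproj
  obtain ⟨-, hrun₁⟩ := isWalk_map_projE h₁
  obtain ⟨-, hrun₂⟩ := isWalk_map_projE h₂
  rw [hproj] at hrun₁
  exact walk_eq_of_map_eq h₁ h₂ hproj (List.cons.inj (hU _ _ _ _ _ hqF hqF hrun₁ hrun₂)).2

end ProdGraph

/-- for `A` unambiguous with single final state `q_F`, the minimum length of a
walk from `v` to `v'` with label in `L(A)` equals the `G×`-distance from `(v,q₀)` to
`(v',q_F)`, and the number of shortest such walks equals the number of shortest `G×`-paths
from `(v,q₀)` to `(v',q_F)`. -/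
theorem shortest_walks_count_eq_product {V E Q S : Type} (G : GraphDB V E S) (A : NFAx Q S)
    (qF : Q) (hF : A.F = {qF}) (hU : A.Unambiguous) (v v' : V) :
    sInf {n : ℕ∞ | ∃ es : List E, G.IsWalk v es v' ∧ es.map G.lab ∈ A.Lang ∧
        (es.length : ℕ∞) = n} = (ProdGraph G A).dist (v, A.q0) (v', qF) ∧
    {es : List E | G.IsWalk v es v' ∧ es.map G.lab ∈ A.Lang ∧
        (es.length : ℕ∞) = sInf {n : ℕ∞ | ∃ es' : List E, G.IsWalk v es' v' ∧
          es'.map G.lab ∈ A.Lang ∧ (es'.length : ℕ∞) = n}}.ncard =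
      {es : List (ProdE G A) | (ProdGraph G A).IsWalk (v, A.q0) es (v', qF) ∧
        (es.length : ℕ∞) = (ProdGraph G A).dist (v, A.q0) (v', qF)}.ncard := by
  have himage := ProdGraph.image_map_projE_walks (G := G) hF v v'
  have hinj := ProdGraph.injOn_map_projE_walks (G := G) (hF ▸ Set.mem_singleton qF) hU v v'
  have hshortest (n : ℕ∞) :
      {es : List E | G.IsWalk v es v' ∧ es.map G.lab ∈ A.Lang ∧ (es.length : ℕ∞) = n} =
        List.map projE '' {ps | (ProdGraph G A).IsWalk (v, A.q0) ps (v', qF) ∧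
          (ps.length : ℕ∞) = n} := by
    ext es
    constructor
    · rintro ⟨hw, hL, hn⟩
      obtain ⟨ps, hps, rfl⟩ := himage.ge ⟨hw, hL⟩
      exact ⟨ps, ⟨hps, by rwa [List.length_map] at hn⟩, rfl⟩
    · rintro ⟨ps, ⟨hps, rfl⟩, rfl⟩
      obtain ⟨hw, hL⟩ := himage.le (Set.mem_image_of_mem _ hps)
      exact ⟨hw, hL, by rw [List.length_map]⟩
  have hdist : sInf {n : ℕ∞ | ∃ es : List E, G.IsWalk v es v' ∧ es.map G.lab ∈ A.Lang ∧
      (es.length : ℕ∞) = n} = (ProdGraph G A).dist (v, A.q0) (v', qF) := by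
    congr 1
    ext n
    simpa [Set.Nonempty] using congrArg Set.Nonempty (hshortest n)
  refine ⟨hdist, ?_⟩
  rw [hdist, hshortest, hinj.mono (fun _ h => h.1) |>.ncard_image]
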